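/- arXiv:1710.03193 — 2 statements merged into one kernel-verified Lean document; each statement's English description precedes it below -/
import Mathlib

section
/- Let F be a non-abelian free group and Δ a decomposition of F. Every Δ-decomposable quasimorphism φ is Δ-continuous; in fact, δ¹φ(g,h) depends only on the r-part of the Δ-triangle of (g,h), so whenever N_Δ((g,h),(g',h')) ≥ 1 one has δ¹φ(g,h) = δ¹φ(g',h'). -/
/-! Common definitions: free groups, reduced products, (bounded) cochains,
decompositions of a free group, Brooks and Rolli quasimorphisms. -/

section Preamble

variable {α : Type} [DecidableEq α]

/-- Word length of an element of a free group (length of its reduced word). -/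
def wlen (g : FreeGroup α) : ℕ := g.toWord.length

/-- A product `g = g₁ ⋯ g_k` is reduced (no cancellation) if the word lengths add up. -/
def ReducedProd (l : List (FreeGroup α)) : Prop :=
  wlen l.prod = (l.map wlen).sum

/-- Inhomogeneous coboundary `δ¹φ(g,h) = φ(g) + φ(h) − φ(gh)`. -/
def d1 (φ : FreeGroup α → ℝ) (g h : FreeGroup α) : ℝ := φ g + φ h - φ (g * h)

/-- Inhomogeneous coboundary `δ²η`. -/
def d2 (η : FreeGroup α → FreeGroup α → ℝ) (g h i : FreeGroup α) : ℝ :=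
  η h i - η (g * h) i + η g (h * i) - η g h

/-- Inhomogeneous coboundary `δ³β`. -/
def d3 (β : FreeGroup α → FreeGroup α → FreeGroup α → ℝ) (g h i j : FreeGroup α) : ℝ :=
  β h i j - β (g * h) i j + β g (h * i) j - β g h (i * j) + β g h i

/-- A quasimorphism on the free group. -/
def IsQuasimorphism (φ : FreeGroup α → ℝ) : Prop :=
  ∃ D > (0 : ℝ), ∀ g h : FreeGroup α, |d1 φ g h| < D

/-- A symmetric map: `φ(g⁻¹) = −φ(g)`. -/
def IsSymmetricMap (φ : FreeGroup α → ℝ) : Prop :=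
  ∀ g : FreeGroup α, φ g⁻¹ = -φ g

/-- Longest common initial sequence of two lists. -/
def commonPrefix {β : Type} [DecidableEq β] : List β → List β → List β
  | a :: as, b :: bs => if a = b then a :: commonPrefix as bs else []
  | _, _ => []

/-- Reversed, entrywise-inverted list: `(g₁, …, g_k) ↦ (g_k⁻¹, …, g₁⁻¹)`. -/
def seqInv (l : List (FreeGroup α)) : List (FreeGroup α) :=
  (l.map fun x => x⁻¹).reverse

/-- `(c̲₁⁻¹)`: the common initial sequence of `Δ(g)` and `Δ(gh)`. -/
def cSeq1 (D : FreeGroup α → List (FreeGroup α)) (g h : FreeGroup α) : List (FreeGroup α) :=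
  commonPrefix (D g) (D (g * h))

/-- `(c̲₂⁻¹)`: the common initial sequence of `Δ(g⁻¹)` and `Δ(h)`. -/
def cSeq2 (D : FreeGroup α → List (FreeGroup α)) (g h : FreeGroup α) : List (FreeGroup α) :=
  commonPrefix (D g⁻¹) (D h)

/-- `(c̲₃⁻¹)`: the common initial sequence of `Δ(h⁻¹)` and `Δ(h⁻¹g⁻¹)`. -/
def cSeq3 (D : FreeGroup α → List (FreeGroup α)) (g h : FreeGroup α) : List (FreeGroup α) :=
  commonPrefix (D h⁻¹) (D (h⁻¹ * g⁻¹))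

/-- `(r̲₁)`: middle part of `Δ(g) = (c̲₁⁻¹)·(r̲₁)·(c̲₂)`. -/
def rSeq1 (D : FreeGroup α → List (FreeGroup α)) (g h : FreeGroup α) : List (FreeGroup α) :=
  ((D g).drop (cSeq1 D g h).length).take
    ((D g).length - (cSeq1 D g h).length - (cSeq2 D g h).length)

/-- `(r̲₂)`: middle part of `Δ(h) = (c̲₂⁻¹)·(r̲₂)·(c̲₃)`. -/
def rSeq2 (D : FreeGroup α → List (FreeGroup α)) (g h : FreeGroup α) : List (FreeGroup α) :=
  ((D h).drop (cSeq2 D g h).length).take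
    ((D h).length - (cSeq2 D g h).length - (cSeq3 D g h).length)

/-- `(r̲₃)`: middle part of `Δ(h⁻¹g⁻¹) = (c̲₃⁻¹)·(r̲₃)·(c̲₁)`. -/
def rSeq3 (D : FreeGroup α → List (FreeGroup α)) (g h : FreeGroup α) : List (FreeGroup α) :=
  ((D (h⁻¹ * g⁻¹)).drop (cSeq3 D g h).length).take
    ((D (h⁻¹ * g⁻¹)).length - (cSeq3 D g h).length - (cSeq1 D g h).length)

/-- A decomposition `Δ` of the free group `F` into pieces `P` (Definition 3.1). -/
structure Decomp (α : Type) [DecidableEq α] where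
  /-- the set of pieces -/
  pieces : Set (FreeGroup α)
  /-- the decomposition map `Δ` -/
  D : FreeGroup α → List (FreeGroup α)
  /-- the uniform bound `R` on the r-parts of `Δ`-triangles -/
  R : ℕ
  R_pos : 0 < R
  pieces_symm : ∀ p ∈ pieces, p⁻¹ ∈ pieces
  one_notin_pieces : (1 : FreeGroup α) ∉ pieces
  mem_pieces : ∀ g : FreeGroup α, ∀ p ∈ D g, p ∈ pieces
  prod_eq : ∀ g : FreeGroup α, (D g).prod = g
  reduced : ∀ g : FreeGroup α, ReducedProd (D g)
  inv_eq : ∀ g : FreeGroup α, D g⁻¹ = seqInv (D g)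
  infix_closed : ∀ (g : FreeGroup α) (l₁ l₂ l₃ : List (FreeGroup α)),
    D g = l₁ ++ l₂ ++ l₃ → D l₂.prod = l₂
  triangle₁ : ∀ g h : FreeGroup α, D g = cSeq1 D g h ++ rSeq1 D g h ++ seqInv (cSeq2 D g h)
  triangle₂ : ∀ g h : FreeGroup α, D h = cSeq2 D g h ++ rSeq2 D g h ++ seqInv (cSeq3 D g h)
  triangle₃ : ∀ g h : FreeGroup α,
    D (h⁻¹ * g⁻¹) = cSeq3 D g h ++ rSeq3 D g h ++ seqInv (cSeq1 D g h)
  rBound₁ : ∀ g h : FreeGroup α, (rSeq1 D g h).length ≤ R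
  rBound₂ : ∀ g h : FreeGroup α, (rSeq2 D g h).length ≤ R
  rBound₃ : ∀ g h : FreeGroup α, (rSeq3 D g h).length ≤ R

/-- The `Δ`-decomposable map `φ_{λ,Δ}(g) = Σ_j λ(g_j)`. -/
def decQM (D : FreeGroup α → List (FreeGroup α)) (lam : FreeGroup α → ℝ)
    (g : FreeGroup α) : ℝ :=
  ((D g).map lam).sum

/-- `φ` is a `Δ`-decomposable quasimorphism (Definition 3.8). -/
def IsDecomposable (dec : Decomp α) (φ : FreeGroup α → ℝ) : Prop :=
  ∃ lam : FreeGroup α → ℝ,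
    (∃ B : ℝ, ∀ p ∈ dec.pieces, |lam p| ≤ B) ∧
    (∀ p ∈ dec.pieces, lam p⁻¹ = -lam p) ∧
    φ = decQM dec.D lam

/-- Agreement (as an extended natural number) of two sequences:
`⊤` if they are equal, otherwise the length of their common initial sequence. -/
def seqAgree {β : Type} [DecidableEq β] (l l' : List β) : ℕ∞ :=
  if l = l' then ⊤ else ((commonPrefix l l').length : ℕ∞)

/-- The quantity `N_Δ((g,h),(g',h'))` measuring how much the `Δ`-triangles of the two
pairs agree around their centres. -/
noncomputable def NDelta (D : FreeGroup α → List (FreeGroup α))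
    (p q : FreeGroup α × FreeGroup α) : ℕ∞ :=
  if p = q then ⊤
  else if rSeq1 D p.1 p.2 = rSeq1 D q.1 q.2 ∧ rSeq2 D p.1 p.2 = rSeq2 D q.1 q.2 ∧
            rSeq3 D p.1 p.2 = rSeq3 D q.1 q.2 then
    min (seqAgree (seqInv (cSeq1 D p.1 p.2)) (seqInv (cSeq1 D q.1 q.2)))
      (min (seqAgree (seqInv (cSeq2 D p.1 p.2)) (seqInv (cSeq2 D q.1 q.2)))
        (seqAgree (seqInv (cSeq3 D p.1 p.2)) (seqInv (cSeq3 D q.1 q.2))))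
  else 0

/-- A bounded symmetric `2`-cocycle `ω` is `Δ`-continuous (Definition 3.12). -/
def DeltaContinuousCocycle (D : FreeGroup α → List (FreeGroup α))
    (ω : FreeGroup α → FreeGroup α → ℝ) : Prop :=
  ∃ s : ℕ → ℝ, (∀ j, 0 ≤ s j) ∧ Summable s ∧
    ∀ p q : FreeGroup α × FreeGroup α, p ≠ q → ∀ N : ℕ, NDelta D p q = (N : ℕ∞) →
      |ω p.1 p.2 - ω q.1 q.2| ≤ s N

/-- A quasimorphism `ψ` is `Δ`-continuous: it is symmetric and `δ¹ψ` is `Δ`-continuous. -/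
def DeltaContinuousQM (D : FreeGroup α → List (FreeGroup α)) (ψ : FreeGroup α → ℝ) : Prop :=
  IsSymmetricMap ψ ∧ IsQuasimorphism ψ ∧ DeltaContinuousCocycle D (d1 ψ)

/-- `ζ`-type sums: `zetaL A (g₁,…,g_k) g' h = Σ_j A(g_j, g_{j+1}⋯g_k·g', h)`. -/
def zetaL (A : FreeGroup α → FreeGroup α → FreeGroup α → ℝ) :
    List (FreeGroup α) → FreeGroup α → FreeGroup α → ℝ
  | [], _, _ => 0
  | p :: rest, g', h => A p (rest.prod * g') h + zetaL A rest g' h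

/-- `ζ(g,g',h) = Σ_j φ(g_j)·ω(g_{j+1}⋯g_k·g', h)` for `Δ(g) = (g₁,…,g_k)`. -/
def zetaD (D : FreeGroup α → List (FreeGroup α)) (φ : FreeGroup α → ℝ)
    (ω : FreeGroup α → FreeGroup α → ℝ) (g g' h : FreeGroup α) : ℝ :=
  zetaL (fun p u v => φ p * ω u v) (D g) g' h

/-- `w` is a subword of `g` (as reduced words). -/
def Subword (w g : FreeGroup α) : Prop :=
  w.toWord <:+: g.toWord

/-- `w` is non self-overlapping: there are no reduced words `x, y` with `x` nontrivial
such that `w = xyx` as a reduced word. -/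
def NonSelfOverlapping (w : FreeGroup α) : Prop :=
  ¬∃ x y : FreeGroup α, x ≠ 1 ∧ w = x * y * x ∧ ReducedProd [x, y, x]

/-- `ν_w(g)`: the number of occurrences of `w` as a subword of the reduced word `g`. -/
def occCount (w g : FreeGroup α) : ℕ :=
  ((List.range (g.toWord.length + 1)).filter
    (fun s => decide ((g.toWord.drop s).take w.toWord.length = w.toWord))).length

/-- The Brooks counting function `φ_w = ν_w − ν_{w⁻¹}`. -/
noncomputable def brooksQM (w : FreeGroup α) (g : FreeGroup α) : ℝ :=
  (occCount w g : ℝ) - (occCount w⁻¹ g : ℝ)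

/-- `φ` is a Brooks counting quasimorphism on some non self-overlapping word. -/
def IsBrooksQM (φ : FreeGroup α → ℝ) : Prop :=
  ∃ w : FreeGroup α, NonSelfOverlapping w ∧ φ = brooksQM w

/-- The interleaved list `(u₁, w^{ε₁}, u₂, …, u_{k−1}, w^{ε_{k−1}}, u_k)` built from
`us = (u₁,…,u_k)` and signs `eps = (ε₁,…,ε_{k−1})`. -/
def wfacList (w : FreeGroup α) : List (FreeGroup α) → List Bool → List (FreeGroup α)
  | [], _ => []
  | [u], _ => [u]
  | u :: us, [] => u :: wfacList w us []
  | u :: us, e :: eps => u :: (if e then w else w⁻¹) :: wfacList w us eps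

/-- `RolliWord l` : `l = ((n₁,m₁),…,(n_k,m_k))` encodes the normal form
`x_{n₁}^{m₁} ⋯ x_{n_k}^{m_k}` (all `m_j ≠ 0`, no consecutive equal indices). -/
def RolliWord {n : ℕ} (l : List (Fin n × ℤ)) : Prop :=
  (∀ p ∈ l, p.2 ≠ 0) ∧ l.Chain' fun p q => p.1 ≠ q.1

/-- The element `x_{n₁}^{m₁} ⋯ x_{n_k}^{m_k}` encoded by `l`. -/
def rolliProd {n : ℕ} (l : List (Fin n × ℤ)) : FreeGroup (Fin n) :=
  (l.map fun p => FreeGroup.of p.1 ^ p.2).prod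

/-- `φ` is a Rolli quasimorphism. -/
def IsRolliQM {n : ℕ} (φ : FreeGroup (Fin n) → ℝ) : Prop :=
  ∃ lam : Fin n → ℤ → ℝ,
    (∀ j, ∃ B : ℝ, ∀ m : ℤ, |lam j m| ≤ B) ∧
    (∀ j m, lam j (-m) = -lam j m) ∧
    φ 1 = 0 ∧
    ∀ l : List (Fin n × ℤ), RolliWord l → φ (rolliProd l) = (l.map fun p => lam p.1 p.2).sum

/-- The list of letters (as group elements) of the reduced word representing `g`. -/
def letters (g : FreeGroup α) : List (FreeGroup α) :=
  g.toWord.map fun p => FreeGroup.mk [p]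

/-- `d` is the common 2-path of `(g,h)`: `g = t₁⁻¹d` and `h = d⁻¹t₂` as reduced words,
with the tripod condition that `gh = t₁⁻¹t₂` is also reduced. -/
def IsCommon2Path (g h d : FreeGroup α) : Prop :=
  ∃ t₁ t₂ : FreeGroup α, g = t₁⁻¹ * d ∧ h = d⁻¹ * t₂ ∧
    ReducedProd [t₁⁻¹, d] ∧ ReducedProd [d⁻¹, t₂] ∧ ReducedProd [t₁⁻¹, t₂]

/-- Case (a) of the alignment of `g, h, i` (Figure 4a). -/
def Align3A (g h i : FreeGroup α) : Prop :=
  ∃ t₁ t₂ t₃ t₄ t₅ : FreeGroup α,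
    g = t₁ * t₂ ∧ h = t₂⁻¹ * t₃ * t₄ ∧ i = t₄⁻¹ * t₅ ∧
    ReducedProd [t₁, t₂] ∧ ReducedProd [t₂⁻¹, t₃, t₄] ∧ ReducedProd [t₄⁻¹, t₅] ∧
    ReducedProd [t₁, t₃, t₅]

/-- Case (b) of the alignment of `g, h, i` (Figure 4b). -/
def Align3B (g h i : FreeGroup α) : Prop :=
  ∃ t₁ t₂ t₃ t₄ t₅ : FreeGroup α,
    g = t₁ * t₂ * t₃ ∧ h = t₃⁻¹ * t₄ ∧ i = t₄⁻¹ * t₂⁻¹ * t₅ ∧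
    ReducedProd [t₁, t₂, t₃] ∧ ReducedProd [t₃⁻¹, t₄] ∧ ReducedProd [t₄⁻¹, t₂⁻¹, t₅] ∧
    ReducedProd [t₁, t₅]

/-- Case (c) of the alignment of `g, h, i` (Figure 4c), with common 3-path `c`. -/
def Align3C (g h i c : FreeGroup α) : Prop :=
  ∃ t₁ t₂ t₃ t₄ : FreeGroup α,
    g = t₁⁻¹ * c * t₂ ∧ h = t₂⁻¹ * c⁻¹ * t₃ ∧ i = t₃⁻¹ * c * t₄ ∧
    ReducedProd [t₁⁻¹, c, t₂] ∧ ReducedProd [t₂⁻¹, c⁻¹, t₃] ∧ ReducedProd [t₃⁻¹, c, t₄] ∧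
    ReducedProd [t₁⁻¹, t₃] ∧ ReducedProd [t₂⁻¹, t₄]

/-- `c` is the common 3-path of `(g,h,i)`: `c` in case (c), the identity otherwise. -/
def IsCommon3Path (g h i c : FreeGroup α) : Prop :=
  Align3C g h i c ∨ (c = 1 ∧ (Align3A g h i ∨ Align3B g h i))

end Preamble

/-!
Write `φ = φ_{λ,Δ}` and use `φ(gh) = −φ(h⁻¹g⁻¹)`. Each c-part of the `Δ`-triangle of `(g,h)` occurs
on two of its sides with opposite orientations, so by oddness of `λ` the c-parts cancel in
`δ¹φ(g,h) = φ(g) + φ(h) + φ(h⁻¹g⁻¹)`, leaving the sum of `λ` over the three r-parts. That sum is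
bounded by `3R · sup |λ|` and depends only on the r-parts, which agree as soon as `N_Δ ≥ 1`.
-/

theorem abs_sum_map_le {β : Type*} {f : β → ℝ} {B : ℝ} :
    ∀ {l : List β}, (∀ x ∈ l, |f x| ≤ B) → |(l.map f).sum| ≤ l.length * B
  | [], _ => by simp
  | a :: l, h => by
    rw [List.forall_mem_cons] at h
    simp only [List.map_cons, List.sum_cons, List.length_cons, Nat.cast_succ, add_mul, one_mul]
    linarith [abs_add_le (f a) (l.map f).sum, abs_sum_map_le h.2, h.1]

theorem sum_map_seqInv {α : Type} {lam : FreeGroup α → ℝ} {l : List (FreeGroup α)}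
    (hodd : ∀ x ∈ l, lam x⁻¹ = -lam x) :
    ((seqInv l).map lam).sum = -(l.map lam).sum := by
  rw [seqInv, List.map_reverse, List.sum_reverse, List.map_map,
    List.map_congr_left (f := lam ∘ fun x => x⁻¹) (g := fun x => -lam x) hodd]
  clear hodd
  induction l with
  | nil => simp
  | cons a l ih => simp only [List.map_cons, List.sum_cons, ih]; ring

namespace Decomp

variable {α : Type} [DecidableEq α] (dec : Decomp α) {lam : FreeGroup α → ℝ}

theorem decQM_inv (hodd : ∀ p ∈ dec.pieces, lam p⁻¹ = -lam p) (g : FreeGroup α) :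
    decQM dec.D lam g⁻¹ = -decQM dec.D lam g := by
  rw [decQM, decQM, dec.inv_eq]
  exact sum_map_seqInv fun x hx => hodd x (dec.mem_pieces g x hx)

theorem decQM_eq_of_eq_append (hodd : ∀ p ∈ dec.pieces, lam p⁻¹ = -lam p)
    {g : FreeGroup α} {c r c' : List (FreeGroup α)} (hg : dec.D g = c ++ r ++ seqInv c') :
    decQM dec.D lam g = (c.map lam).sum + (r.map lam).sum - (c'.map lam).sum := by
  have hc' : ∀ x ∈ c', x ∈ dec.pieces := fun x hx => by
    simpa using dec.pieces_symm _ <| dec.mem_pieces g x⁻¹ (by simp [hg, seqInv, hx])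
  rw [decQM, hg, List.map_append, List.map_append, List.sum_append, List.sum_append,
    sum_map_seqInv fun x hx => hodd x (hc' x hx), sub_eq_add_neg]

theorem d1_decQM (hodd : ∀ p ∈ dec.pieces, lam p⁻¹ = -lam p) (g h : FreeGroup α) :
    d1 (decQM dec.D lam) g h = ((rSeq1 dec.D g h).map lam).sum
      + ((rSeq2 dec.D g h).map lam).sum + ((rSeq3 dec.D g h).map lam).sum := by
  have hgh : decQM dec.D lam (g * h) = -decQM dec.D lam (h⁻¹ * g⁻¹) := by
    rw [← dec.decQM_inv hodd, mul_inv_rev, inv_inv, inv_inv]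
  rw [d1, hgh, dec.decQM_eq_of_eq_append hodd (dec.triangle₁ g h),
    dec.decQM_eq_of_eq_append hodd (dec.triangle₂ g h),
    dec.decQM_eq_of_eq_append hodd (dec.triangle₃ g h)]
  ring

theorem abs_d1_decQM_le (hodd : ∀ p ∈ dec.pieces, lam p⁻¹ = -lam p) {B : ℝ} (hB0 : 0 ≤ B)
    (hB : ∀ p ∈ dec.pieces, |lam p| ≤ B) (g h : FreeGroup α) :
    |d1 (decQM dec.D lam) g h| ≤ 3 * dec.R * B := by
  have hpart : ∀ {k : FreeGroup α} {c r c' : List (FreeGroup α)}, dec.D k = c ++ r ++ c' →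
      r.length ≤ dec.R → |(r.map lam).sum| ≤ dec.R * B := fun {k _ _ _} hk hlen =>
    (abs_sum_map_le fun x hx => hB x (dec.mem_pieces k x (by simp [hk, hx]))).trans
      (mul_le_mul_of_nonneg_right (by exact_mod_cast hlen) hB0)
  rw [dec.d1_decQM hodd]
  linarith [abs_add_le (((rSeq1 dec.D g h).map lam).sum + ((rSeq2 dec.D g h).map lam).sum)
      ((rSeq3 dec.D g h).map lam).sum,
    abs_add_le ((rSeq1 dec.D g h).map lam).sum ((rSeq2 dec.D g h).map lam).sum,
    hpart (dec.triangle₁ g h) (dec.rBound₁ g h), hpart (dec.triangle₂ g h) (dec.rBound₂ g h),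
    hpart (dec.triangle₃ g h) (dec.rBound₃ g h)]

end Decomp

section Continuity

variable {α : Type} [DecidableEq α] {D : FreeGroup α → List (FreeGroup α)}

theorem eq_or_rSeq_eq_of_NDelta_ne_zero {p q : FreeGroup α × FreeGroup α}
    (h : NDelta D p q ≠ 0) :
    p = q ∨ (rSeq1 D p.1 p.2 = rSeq1 D q.1 q.2 ∧ rSeq2 D p.1 p.2 = rSeq2 D q.1 q.2 ∧
      rSeq3 D p.1 p.2 = rSeq3 D q.1 q.2) := by
  unfold NDelta at h
  split_ifs at h with hpq hr
  exacts [Or.inl hpq, Or.inr hr, absurd rfl h]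

theorem deltaContinuousCocycle_of_abs_le {ω : FreeGroup α → FreeGroup α → ℝ} {C : ℝ}
    (hC : ∀ g h, |ω g h| ≤ C) (hω : ∀ p q, NDelta D p q ≠ 0 → ω p.1 p.2 = ω q.1 q.2) :
    DeltaContinuousCocycle D ω := by
  have hs : 0 ≤ Pi.single (M := fun _ : ℕ => ℝ) 0 (2 * C) :=
    Pi.single_nonneg.2 (by linarith [(abs_nonneg _).trans (hC 1 1)])
  refine ⟨Pi.single 0 (2 * C), hs, (hasSum_pi_single 0 _).summable, fun p q _ N hN => ?_⟩
  rcases eq_or_ne N 0 with rfl | hN0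
  · rw [Pi.single_eq_same]
    linarith [abs_sub (ω p.1 p.2) (ω q.1 q.2), hC p.1 p.2, hC q.1 q.2]
  · rw [hω p q (by rw [hN]; exact_mod_cast hN0), sub_self, abs_zero]
    exact hs N

theorem Decomp.d1_decQM_eq_of_NDelta_ne_zero (dec : Decomp α) {lam : FreeGroup α → ℝ}
    (hodd : ∀ p ∈ dec.pieces, lam p⁻¹ = -lam p) {p q : FreeGroup α × FreeGroup α}
    (h : NDelta dec.D p q ≠ 0) :
    d1 (decQM dec.D lam) p.1 p.2 = d1 (decQM dec.D lam) q.1 q.2 := by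
  rcases eq_or_rSeq_eq_of_NDelta_ne_zero h with rfl | ⟨h₁, h₂, h₃⟩
  · rfl
  · rw [dec.d1_decQM hodd, dec.d1_decQM hodd, h₁, h₂, h₃]

end Continuity

theorem decomposable_is_continuous_general {α : Type} [DecidableEq α]
    (dec : Decomp α)
    (φ : FreeGroup α → ℝ) (hφ : IsDecomposable dec φ) :
    DeltaContinuousQM dec.D φ ∧
    ∀ p q : FreeGroup α × FreeGroup α, 1 ≤ NDelta dec.D p q →
      d1 φ p.1 p.2 = d1 φ q.1 q.2 := by
  obtain ⟨lam, ⟨B, hB⟩, hodd, rfl⟩ := hφ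
  have hbound := dec.abs_d1_decQM_le hodd (le_max_right B 0)
    fun p hp => (hB p hp).trans (le_max_left B 0)
  have hrpart : ∀ p q : FreeGroup α × FreeGroup α, NDelta dec.D p q ≠ 0 →
      d1 (decQM dec.D lam) p.1 p.2 = d1 (decQM dec.D lam) q.1 q.2 :=
    fun _ _ => dec.d1_decQM_eq_of_NDelta_ne_zero hodd
  refine ⟨⟨dec.decQM_inv hodd, ⟨_, by positivity, fun g h => (hbound g h).trans_lt (lt_add_one _)⟩,
    deltaContinuousCocycle_of_abs_le hbound hrpart⟩,
    fun p q hpq => hrpart p q (Order.one_le_iff_ne_zero.1 hpq)⟩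

/-- Proposition 3.14 (1): every `Δ`-decomposable quasimorphism is
`Δ`-continuous; in fact `δ¹φ(g,h) = δ¹φ(g',h')` whenever `N_Δ((g,h),(g',h')) ≥ 1`. -/
theorem decomposable_is_continuous {α : Type} [Fintype α] [DecidableEq α]
    (hab : ∃ a b : α, a ≠ b) (dec : Decomp α)
    (φ : FreeGroup α → ℝ) (hφ : IsDecomposable dec φ) :
    DeltaContinuousQM dec.D φ ∧
    ∀ p q : FreeGroup α × FreeGroup α, 1 ≤ NDelta dec.D p q →
      d1 φ p.1 p.2 = d1 φ q.1 q.2 :=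
  decomposable_is_continuous_general dec φ hφ
end

section
/- Let F be a non-abelian free group and φ_w the Brooks counting quasimorphism on a non self-overlapping word w of word length m. Then for every decomposition Δ of F, whenever N_Δ((g,h),(g',h')) ≥ m one has δ¹φ_w(g,h) = δ¹φ_w(g',h'); consequently φ_w is Δ-continuous for every decomposition Δ. -/
/-! Write the reduced words of `g`, `h`, `gh` as `A·c`, `c⁻¹·B`, `A·B` (the tripod of `(g, h)`).
An occurrence of `w` in a concatenation `U·V` lies in `U`, lies in `V`, or straddles the junction
and then lies in the last `m - 1` letters of `U` followed by the first `m - 1` letters of `V`.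
In `δ¹φ_w(g, h)` the occurrences inside `A`, `B` cancel, and so do those inside `c` and `c⁻¹`,
because `φ_w` counts `w` in `c⁻¹` as it counts `w⁻¹` in `c`. Hence `δ¹φ_w(g, h)` only depends on
the `m - 1` letters on each side of the centre of the tripod, and is bounded.

The `Δ`-triangle writes `g`, `h`, `gh` as c-parts surrounding the r-parts, and the centre of the
tripod sits inside the r-parts at an offset determined by their lengths alone. When
`N_Δ ≥ m`, the r-parts of the two pairs coincide and their c-parts share the last `m` pieces,
hence (pieces being nontrivial) at least the last `m` letters; so the windows around the two
centres coincide. A bounded cocycle that is constant as soon as `N_Δ ≥ m` is `Δ`-continuous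
with a finitely supported sequence `s`. -/

namespace List

variable {β γ : Type*}

theorem add_length_le_of_take_drop_eq {W L : List β} (hW : W ≠ []) {s : ℕ}
    (h : (L.drop s).take W.length = W) : s + W.length ≤ L.length := by
  have hlen := congrArg length h
  have := length_pos_iff.2 hW
  simp only [length_take, length_drop] at hlen
  omega

theorem take_drop_reverse {L : List β} {s n : ℕ} (h : s + n ≤ L.length) :
    (L.reverse.drop s).take n = ((L.drop (L.length - n - s)).take n).reverse := by
  rw [drop_reverse, take_reverse, length_take, drop_take, min_eq_left (by omega)]
  congr 3 <;> omega

theorem rtake_append_of_le_length {X Y : List β} {k : ℕ} (h : k ≤ Y.length) :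
    (X ++ Y).rtake k = Y.rtake k := by
  rw [rtake, rtake, length_append, drop_append, drop_eq_nil_of_le (by omega), nil_append]
  congr 1
  omega

theorem take_append_congr {X X' : List β} (Y : List β) {k : ℕ} (h : X.take k = X'.take k) :
    (Y ++ X).take k = (Y ++ X').take k := by
  rw [take_append, take_append, ← min_eq_left (Nat.sub_le k Y.length), ← take_take, h, take_take]

theorem rtake_append_congr {X X' : List β} (Y : List β) {k : ℕ} (h : X.rtake k = X'.rtake k) :
    (X ++ Y).rtake k = (X' ++ Y).rtake k := by
  simp only [rtake_eq_reverse_take_reverse, reverse_append] at h ⊢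
  rw [take_append_congr _ (reverse_inj.1 h)]

theorem eq_append_take_of_append_eq {X Y P M Q : List β} (h : X ++ Y = P ++ M ++ Q)
    (h₁ : P.length ≤ X.length) (h₂ : X.length ≤ P.length + M.length) :
    X = P ++ M.take (X.length - P.length) ∧ Y = M.drop (X.length - P.length) ++ Q := by
  have hX := congrArg (take X.length) h
  have hY := congrArg (drop X.length) h
  rw [take_left' rfl] at hX
  rw [drop_left' rfl] at hY
  have hM : X.length - P.length - M.length = 0 := by omega
  refine ⟨hX.trans ?_, hY.trans ?_⟩
  · rw [append_assoc, take_append, take_of_length_le h₁, take_append, hM, take_zero, append_nil]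
  · rw [append_assoc, drop_append, drop_eq_nil_of_le h₁, nil_append, drop_append, hM, drop_zero]

variable [DecidableEq β] [DecidableEq γ]

def countInfix (W L : List β) : ℕ :=
  ((range (L.length + 1)).filter fun s => decide ((L.drop s).take W.length = W)).length

theorem countInfix_eq_card (W L : List β) :
    countInfix W L = ((Finset.range (L.length + 1)).filter
      fun s => (L.drop s).take W.length = W).card :=
  rfl

theorem countInfix_le (W L : List β) : countInfix W L ≤ L.length + 1 :=
  (length_filter_le _ _).trans_eq length_range

theorem countInfix_nil_left (L : List β) : countInfix [] L = L.length + 1 := by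
  simp [countInfix]

theorem countInfix_eq_zero_of_length_lt {W L : List β} (h : L.length < W.length) :
    countInfix W L = 0 := by
  rw [countInfix, length_eq_zero_iff, filter_eq_nil_iff]
  intro s _ hs
  have := add_length_le_of_take_drop_eq (ne_nil_of_length_pos (by omega)) (of_decide_eq_true hs)
  omega

theorem countInfix_cons (W : List β) (a : β) (L : List β) :
    countInfix W (a :: L) = countInfix W L + if W <+: a :: L then 1 else 0 := by
  rw [countInfix, countInfix, ← countP_eq_length_filter, ← countP_eq_length_filter, length_cons,
    range_succ_eq_map, countP_cons, countP_map, drop_zero]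
  simp [Function.comp_def, prefix_iff_eq_take, eq_comm]

theorem countInfix_append {W : List β} (hW : W ≠ []) (U V : List β) :
    countInfix W (U ++ V) = countInfix W U + countInfix W V +
      countInfix W (U.rtake (W.length - 1) ++ V.take (W.length - 1)) := by
  have hW := length_pos_iff.2 hW
  induction U with
  | nil =>
    rw [nil_append, rtake_nil, nil_append, countInfix_eq_zero_of_length_lt (L := []) (by simpa),
      countInfix_eq_zero_of_length_lt (L := V.take _) (by simp; omega)]
    simp
  | cons a U ih =>
    rw [cons_append, countInfix_cons, ih, countInfix_cons]
    by_cases hU : W.length - 1 ≤ U.length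
    · have hrt : (a :: U).rtake (W.length - 1) = U.rtake (W.length - 1) := by
        simp only [rtake, length_cons, show U.length + 1 - (W.length - 1) =
          (U.length - (W.length - 1)) + 1 by omega, drop_succ_cons]
      simp only [hrt, ← cons_append, isPrefix_append_of_length (show W.length ≤ (a :: U).length by
        simp; omega)]
      omega
    · have hrt : ∀ L : List β, L.length ≤ W.length - 1 → L.rtake (W.length - 1) = L :=
        fun L hL => by simp [rtake, Nat.sub_eq_zero_of_le hL]
      have hwin : a :: (U ++ V.take (W.length - 1)) =
          (a :: (U ++ V)).take (U.length + (W.length - 1) + 1) := by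
        rw [take_succ_cons, take_length_add_append]
      have hshort : ¬ W <+: a :: U := fun h => by have := h.length_le; simp at this; omega
      rw [hrt U (by omega), hrt (a :: U) (by simp; omega), cons_append, countInfix_cons, hwin]
      simp only [prefix_take_iff, hshort, if_false,
        show W.length ≤ U.length + (W.length - 1) + 1 by omega, and_true]
      omega

theorem countInfix_reverse (W L : List β) :
    countInfix W.reverse L.reverse = countInfix W L := by
  rcases eq_or_ne W [] with rfl | hW
  · simp [countInfix_nil_left]
  have hlen : ∀ {s}, (L.reverse.drop s).take W.length = W.reverse → s + W.length ≤ L.length :=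
    fun h => by
      simpa using add_length_le_of_take_drop_eq (W := W.reverse) (L := L.reverse) (by simpa)
        (by simpa using h)
  have hlen' : ∀ {s}, (L.drop s).take W.length = W → s + W.length ≤ L.length :=
    add_length_le_of_take_drop_eq hW
  simp only [countInfix_eq_card, length_reverse]
  refine Finset.card_nbij' (fun s => L.length - W.length - s) (fun s => L.length - W.length - s)
    ?_ ?_ ?_ ?_
  · intro s hs
    simp only [Finset.mem_coe, Finset.mem_filter, Finset.mem_range] at hs ⊢
    have := hlen hs.2
    rw [take_drop_reverse this, reverse_inj] at hs
    exact ⟨by omega, hs.2⟩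
  · intro s hs
    simp only [Finset.mem_coe, Finset.mem_filter, Finset.mem_range] at hs ⊢
    have := hlen' hs.2
    refine ⟨by omega, ?_⟩
    rw [take_drop_reverse (by omega), reverse_inj,
      show L.length - W.length - (L.length - W.length - s) = s by omega, hs.2]
  · intro s hs
    have := hlen (Finset.mem_filter.1 hs).2
    dsimp only
    omega
  · intro s hs
    have := hlen' (Finset.mem_filter.1 hs).2
    dsimp only
    omega

theorem countInfix_map {f : β → γ} (hf : Function.Injective f) (W L : List β) :
    countInfix (W.map f) (L.map f) = countInfix W L := by
  simp only [countInfix, length_map, ← map_drop, ← map_take, (map_injective_iff.2 hf).eq_iff]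

end List

theorem commonPrefix_isPrefix {β : Type} [DecidableEq β] (l l' : List β) :
    commonPrefix l l' <+: l ∧ commonPrefix l l' <+: l' := by
  induction l generalizing l' with
  | nil => simp [commonPrefix]
  | cons a l ih =>
    cases l' with
    | nil => simp [commonPrefix]
    | cons b l' =>
      by_cases hab : a = b
      · subst hab
        simpa [commonPrefix] using ih l'
      · simp [commonPrefix, hab]

theorem eq_or_take_eq_of_le_seqAgree {β : Type} [DecidableEq β] {l l' : List β} {m : ℕ}
    (h : (m : ℕ∞) ≤ seqAgree l l') : l = l' ∨ m ≤ l.length ∧ l.take m = l'.take m := by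
  unfold seqAgree at h
  split_ifs at h with hll'
  · exact Or.inl hll'
  obtain ⟨hl, hl'⟩ := commonPrefix_isPrefix l l'
  have hm : m ≤ (commonPrefix l l').length := by exact_mod_cast h
  refine Or.inr ⟨hm.trans hl.length_le, ?_⟩
  have htake : ∀ {L : List β}, commonPrefix l l' <+: L → L.take m = (commonPrefix l l').take m :=
    fun ⟨_, ht⟩ => ht ▸ List.take_append_of_le_length hm
  rw [htake hl, htake hl']

section SeqInv

open List FreeGroup

variable {α : Type}

theorem seqInv_prod (l : List (FreeGroup α)) : (seqInv l).prod = l.prod⁻¹ :=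
  (prod_inv_reverse l).symm

theorem seqInv_seqInv (l : List (FreeGroup α)) : seqInv (seqInv l) = l := by
  simp [seqInv, map_reverse]

theorem length_seqInv (l : List (FreeGroup α)) : (seqInv l).length = l.length := by
  simp [seqInv]

theorem take_seqInv (l : List (FreeGroup α)) (m : ℕ) : (seqInv l).take m = seqInv (l.rtake m) := by
  simp [seqInv, take_reverse, rtake, map_drop]

theorem flatMap_toWord_seqInv [DecidableEq α] (l : List (FreeGroup α)) :
    (seqInv l).flatMap toWord = invRev (l.flatMap toWord) := by
  simp only [seqInv, invRev, flatMap_reverse, flatMap_map, Function.comp_def, toWord_inv,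
    reverse_reverse, map_flatMap]

end SeqInv

namespace FreeGroup

open List

variable {α : Type}

theorem take_invRev (L : List (α × Bool)) (k : ℕ) : (invRev L).take k = invRev (L.rtake k) := by
  simp [invRev, rtake, take_reverse, map_drop]

theorem rtake_invRev (L : List (α × Bool)) (k : ℕ) : (invRev L).rtake k = invRev (L.take k) := by
  simp [invRev, rtake_eq_reverse_take_reverse, map_take]

theorem tripod_eq_of_triangle {A c B P₁ P₂ P₃ M₁ M₂ M₃ : List (α × Bool)}
    (hg : A ++ c = P₁ ++ M₁ ++ invRev P₂) (hh : invRev c ++ B = P₂ ++ M₂ ++ invRev P₃)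
    (hgh : A ++ B = P₁ ++ invRev M₃ ++ invRev P₃)
    (h₁ : M₁.length ≤ M₂.length + M₃.length) (h₂ : M₂.length ≤ M₁.length + M₃.length)
    (h₃ : M₃.length ≤ M₁.length + M₂.length) :
    A = P₁ ++ M₁.take ((M₁.length + M₃.length - M₂.length) / 2) ∧
      c = M₁.drop ((M₁.length + M₃.length - M₂.length) / 2) ++ invRev P₂ ∧
      B = (invRev M₃).drop ((M₁.length + M₃.length - M₂.length) / 2) ++ invRev P₃ := by
  have lg := congrArg length hg
  have lh := congrArg length hh
  have lgh := congrArg length hgh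
  simp only [length_append, invRev_length] at lg lh lgh
  have hκ : A.length - P₁.length = (M₁.length + M₃.length - M₂.length) / 2 := by omega
  obtain ⟨hA, hc⟩ := eq_append_take_of_append_eq hg (by omega) (by omega)
  obtain ⟨-, hB⟩ := eq_append_take_of_append_eq hgh (by omega) (by simp [invRev_length]; omega)
  rw [hκ] at hA hc hB
  exact ⟨hA, hc, hB⟩

variable [DecidableEq α]

theorem countInfix_invRev (W L : List (α × Bool)) :
    countInfix (invRev W) (invRev L) = countInfix W L := by
  have hinj : Function.Injective fun x : α × Bool => (x.1, !x.2) :=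
    Function.Involutive.injective fun x => by simp
  rw [invRev, invRev, countInfix_reverse, countInfix_map hinj]

theorem exists_split_isReduced_append {L₁ L₂ : List (α × Bool)} (h₁ : IsReduced L₁)
    (h₂ : IsReduced L₂) :
    ∃ A c B, L₁ = A ++ c ∧ L₂ = invRev c ++ B ∧ IsReduced (A ++ B) := by
  induction L₂ generalizing L₁ with
  | nil => exact ⟨L₁, [], [], by simp, by simp, by simpa⟩
  | cons y L₂ ih =>
    rcases eq_nil_or_concat' L₁ with rfl | ⟨T, x, rfl⟩
    · exact ⟨[], [], y :: L₂, by simp, by simp, by simpa⟩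
    by_cases hxy : y = (x.1, !x.2)
    · obtain ⟨A, c, B, rfl, rfl, hAB⟩ :=
        ih (h₁.infix ⟨[], [x], rfl⟩) (h₂.infix ⟨[y], [], by simp⟩)
      exact ⟨A, c ++ [x], B, by simp, by simp [invRev, hxy], hAB⟩
    · refine ⟨T ++ [x], [], y :: L₂, by simp, by simp, h₁.append_overlap ?_ (by simp)⟩
      rw [singleton_append, isReduced_cons_cons]
      refine ⟨fun h => ?_, h₂⟩
      obtain ⟨x₁, x₂⟩ := x
      obtain ⟨y₁, y₂⟩ := y
      cases x₂ <;> cases y₂ <;> simp_all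

theorem exists_toWord_tripod (g h : FreeGroup α) :
    ∃ A c B, g.toWord = A ++ c ∧ h.toWord = invRev c ++ B ∧ (g * h).toWord = A ++ B := by
  obtain ⟨A, c, B, hg, hh, hAB⟩ :=
    exists_split_isReduced_append (isReduced_toWord (x := g)) (isReduced_toWord (x := h))
  refine ⟨A, c, B, hg, hh, ?_⟩
  rw [← mk_toWord (x := g), ← mk_toWord (x := h), hg, hh, ← mul_mk, ← mul_mk, ← inv_mk,
    mul_assoc, mul_inv_cancel_left, mul_mk, toWord_mk, hAB.reduce_eq]

theorem toWord_mul_of_wlen_eq {a b : FreeGroup α} (h : wlen (a * b) = wlen a + wlen b) :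
    (a * b).toWord = a.toWord ++ b.toWord := by
  unfold wlen at h
  rw [toWord_mul] at h ⊢
  exact reduce.red.sublist.eq_of_length (by rw [h, length_append])

theorem wlen_prod_le (l : List (FreeGroup α)) : wlen l.prod ≤ (l.map wlen).sum := by
  induction l with
  | nil => simp [wlen]
  | cons a l ih =>
    rw [prod_cons, map_cons, sum_cons]
    exact (norm_mul_le a l.prod).trans (Nat.add_le_add_left ih _)

theorem _root_.ReducedProd.toWord_prod {l : List (FreeGroup α)} (h : ReducedProd l) :
    l.prod.toWord = l.flatMap toWord := by
  induction l with
  | nil => simp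
  | cons a l ih =>
    have hmul : wlen (a * l.prod) ≤ wlen a + wlen l.prod := norm_mul_le a l.prod
    have hl := wlen_prod_le l
    rw [ReducedProd, prod_cons, map_cons, sum_cons] at h
    rw [prod_cons, toWord_mul_of_wlen_eq (by omega), ih (by rw [ReducedProd]; omega), flatMap_cons]

theorem wlen_le_add_of_mul_mul_eq_one {x y z : FreeGroup α} (h : x * y * z = 1) :
    wlen z ≤ wlen x + wlen y := by
  rw [eq_inv_of_mul_eq_one_right h]
  exact (norm_inv_eq (x := x * y)).trans_le (norm_mul_le x y)

theorem wlen_triangle_of_mul_mul_eq_one {x y z : FreeGroup α} (h : x * y * z = 1) :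
    wlen x ≤ wlen y + wlen z ∧ wlen y ≤ wlen z + wlen x ∧ wlen z ≤ wlen x + wlen y := by
  refine ⟨wlen_le_add_of_mul_mul_eq_one ?_, wlen_le_add_of_mul_mul_eq_one ?_,
    wlen_le_add_of_mul_mul_eq_one h⟩
  · rwa [mul_assoc, mul_eq_one_comm] at h
  · rwa [mul_eq_one_comm, ← mul_assoc] at h

theorem length_le_length_flatMap_toWord {l : List (FreeGroup α)} (hl : 1 ∉ l) :
    l.length ≤ (l.flatMap toWord).length := by
  induction l with
  | nil => simp
  | cons a l ih =>
    have ha : a.toWord ≠ [] := by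
      rw [Ne, toWord_eq_nil_iff]
      rintro rfl
      exact hl mem_cons_self
    have := length_pos_iff.2 ha
    simp only [length_cons, flatMap_cons, length_append]
    have := ih (fun h => hl (mem_cons_of_mem a h))
    omega

theorem rtake_flatMap_toWord_eq_of_le_seqAgree {l l' : List (FreeGroup α)} (hl : 1 ∉ l)
    {k m : ℕ} (hk : k ≤ m) (h : (m : ℕ∞) ≤ seqAgree (seqInv l) (seqInv l')) :
    (l.flatMap toWord).rtake k = (l'.flatMap toWord).rtake k := by
  rcases eq_or_take_eq_of_le_seqAgree h with h | ⟨hm, h⟩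
  · rw [← seqInv_seqInv l, h, seqInv_seqInv]
  rw [length_seqInv] at hm
  rw [take_seqInv, take_seqInv] at h
  have hS : l.rtake m = l'.rtake m := by rw [← seqInv_seqInv (l.rtake m), h, seqInv_seqInv]
  have hsplit : ∀ L : List (FreeGroup α), L.flatMap toWord =
      (L.take (L.length - m)).flatMap toWord ++ (L.rtake m).flatMap toWord := fun L => by
    rw [← flatMap_append, rtake, take_append_drop]
  have hlen : k ≤ ((l.rtake m).flatMap toWord).length := by
    refine hk.trans (le_trans ?_ (length_le_length_flatMap_toWord fun h1 => hl ?_))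
    · simp [rtake]; omega
    · exact mem_of_mem_drop h1
  rw [hsplit l, hsplit l', rtake_append_of_le_length hlen, ← hS, rtake_append_of_le_length hlen]

end FreeGroup

section Brooks

open List FreeGroup

variable {α : Type} [DecidableEq α]

theorem occCount_eq_countInfix (w g : FreeGroup α) :
    occCount w g = countInfix w.toWord g.toWord :=
  rfl

theorem occCount_inv_inv (w g : FreeGroup α) : occCount w⁻¹ g⁻¹ = occCount w g := by
  simp only [occCount_eq_countInfix, toWord_inv, countInfix_invRev]

theorem brooksQM_isSymmetricMap (w : FreeGroup α) : IsSymmetricMap (brooksQM w) := by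
  intro g
  rw [brooksQM, brooksQM, ← occCount_inv_inv w⁻¹ g, inv_inv, occCount_inv_inv]
  ring

theorem brooksQM_one : brooksQM (1 : FreeGroup α) = 0 := by
  funext g
  simp [brooksQM]

def junctionCount (W A c B : List (α × Bool)) : ℝ :=
  countInfix W (A ++ c) + countInfix W (invRev c ++ B) - countInfix W (A ++ B)

theorem d1_brooksQM_eq_junctionCount {w g h : FreeGroup α} (hw : w ≠ 1)
    {A c B : List (α × Bool)} (hg : g.toWord = A ++ c) (hh : h.toWord = invRev c ++ B)
    (hgh : (g * h).toWord = A ++ B) :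
    d1 (brooksQM w) g h =
      junctionCount w.toWord (A.rtake (wlen w - 1)) (c.take (wlen w - 1)) (B.take (wlen w - 1)) -
      junctionCount (invRev w.toWord) (A.rtake (wlen w - 1)) (c.take (wlen w - 1))
        (B.take (wlen w - 1)) := by
  have hW : w.toWord ≠ [] := by rwa [Ne, toWord_eq_nil_iff]
  have hW' : invRev w.toWord ≠ [] := by rwa [Ne, ← invRev_empty, invRev_injective.eq_iff]
  have hcross : countInfix (invRev w.toWord) c = countInfix w.toWord (invRev c) := by
    rw [← countInfix_invRev, invRev_invRev]
  simp only [d1, brooksQM, occCount_eq_countInfix, toWord_inv, hg, hh, hgh]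
  rw [countInfix_append hW A c, countInfix_append hW (invRev c) B, countInfix_append hW A B,
    countInfix_append hW' A c, countInfix_append hW' (invRev c) B, countInfix_append hW' A B,
    countInfix_invRev, hcross]
  simp only [invRev_length, rtake_invRev, junctionCount, wlen]
  push_cast
  ring

theorem abs_junctionCount_le (W A c B : List (α × Bool)) :
    |junctionCount W A c B| ≤ 2 * (A.length + c.length + B.length + 1) := by
  have h₁ : (countInfix W (A ++ c) : ℝ) ≤ A.length + c.length + 1 := by
    exact_mod_cast (countInfix_le W _).trans_eq (by simp)
  have h₂ : (countInfix W (invRev c ++ B) : ℝ) ≤ c.length + B.length + 1 := by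
    exact_mod_cast (countInfix_le W _).trans_eq (by simp [invRev_length])
  have h₃ : (countInfix W (A ++ B) : ℝ) ≤ A.length + B.length + 1 := by
    exact_mod_cast (countInfix_le W _).trans_eq (by simp)
  rw [junctionCount, abs_le]
  constructor <;> linarith [(countInfix W (A ++ c)).cast_nonneg (α := ℝ),
    (countInfix W (invRev c ++ B)).cast_nonneg (α := ℝ), (countInfix W (A ++ B)).cast_nonneg (α := ℝ)]

theorem abs_d1_brooksQM_le (w g h : FreeGroup α) :
    |d1 (brooksQM w) g h| ≤ 4 * (3 * wlen w + 1) := by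
  rcases eq_or_ne w 1 with rfl | hw
  · simp only [brooksQM_one, d1, Pi.zero_apply, sub_zero, add_zero, abs_zero]
    positivity
  obtain ⟨A, c, B, hg, hh, hgh⟩ := exists_toWord_tripod g h
  rw [d1_brooksQM_eq_junctionCount hw hg hh hgh]
  set k := wlen w - 1
  have hk : (k : ℝ) ≤ wlen w := by exact_mod_cast Nat.sub_le _ _
  have hA : ((A.rtake k).length : ℝ) ≤ k := by exact_mod_cast (by simp [rtake]; omega)
  have hc : ((c.take k).length : ℝ) ≤ k := by simp
  have hB : ((B.take k).length : ℝ) ≤ k := by simp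
  calc _ ≤ |junctionCount w.toWord (A.rtake k) (c.take k) (B.take k)| +
        |junctionCount (invRev w.toWord) (A.rtake k) (c.take k) (B.take k)| := abs_sub _ _
    _ ≤ _ := by
      linarith [abs_junctionCount_le w.toWord (A.rtake k) (c.take k) (B.take k),
        abs_junctionCount_le (invRev w.toWord) (A.rtake k) (c.take k) (B.take k)]

end Brooks

theorem mul_mul_eq_one_of_triangle {G : Type*} [Group G] {a b c r₁ r₂ r₃ g h : G}
    (e₁ : a * r₁ * b⁻¹ = g) (e₂ : b * r₂ * c⁻¹ = h) (e₃ : c * r₃ * a⁻¹ = h⁻¹ * g⁻¹) :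
    r₁ * r₂ * r₃ = 1 := by
  subst e₁ e₂
  calc r₁ * r₂ * r₃ = r₁ * r₂ * (c⁻¹ * (c * r₃ * a⁻¹) * a) := by group
    _ = 1 := by rw [e₃]; group

namespace Decomp

open List FreeGroup

variable {α : Type} [DecidableEq α] (dec : Decomp α)

theorem toWord_eq_flatMap (g : FreeGroup α) : g.toWord = (dec.D g).flatMap toWord := by
  conv_lhs => rw [← dec.prod_eq g]
  exact (dec.reduced g).toWord_prod

theorem toWord_eq_of_D_eq {x : FreeGroup α} {a r b : List (FreeGroup α)}
    (hx : dec.D x = a ++ r ++ seqInv b) :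
    x.toWord = a.flatMap toWord ++ r.flatMap toWord ++ invRev (b.flatMap toWord) := by
  rw [dec.toWord_eq_flatMap, hx, flatMap_append, flatMap_append, flatMap_toWord_seqInv]

theorem toWord_mul_eq_triangle (g h : FreeGroup α) :
    (g * h).toWord = (cSeq1 dec.D g h).flatMap toWord ++
      invRev ((rSeq3 dec.D g h).flatMap toWord) ++ invRev ((cSeq3 dec.D g h).flatMap toWord) := by
  rw [← inv_inv (g * h), toWord_inv, mul_inv_rev, dec.toWord_eq_of_D_eq (dec.triangle₃ g h),
    invRev_append, invRev_append, invRev_invRev, append_assoc]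

theorem wlen_prod_eq_length {x : FreeGroup α} {l₁ l₂ l₃ : List (FreeGroup α)}
    (hx : dec.D x = l₁ ++ l₂ ++ l₃) : wlen l₂.prod = (l₂.flatMap toWord).length := by
  rw [wlen, dec.toWord_eq_flatMap, dec.infix_closed x l₁ l₂ l₃ hx]

theorem rSeq_prod_mul_mul_eq_one (g h : FreeGroup α) :
    (rSeq1 dec.D g h).prod * (rSeq2 dec.D g h).prod * (rSeq3 dec.D g h).prod = 1 := by
  have e₁ := dec.prod_eq g
  have e₂ := dec.prod_eq h
  have e₃ := dec.prod_eq (h⁻¹ * g⁻¹)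
  rw [dec.triangle₁ g h, prod_append, prod_append, seqInv_prod] at e₁
  rw [dec.triangle₂ g h, prod_append, prod_append, seqInv_prod] at e₂
  rw [dec.triangle₃ g h, prod_append, prod_append, seqInv_prod] at e₃
  exact mul_mul_eq_one_of_triangle e₁ e₂ e₃

theorem one_not_mem_commonPrefix (x y : FreeGroup α) : 1 ∉ commonPrefix (dec.D x) (dec.D y) :=
  fun h => dec.one_notin_pieces (dec.mem_pieces x 1 ((commonPrefix_isPrefix _ _).1.subset h))

theorem tripod_eq {g h : FreeGroup α} {A c B : List (α × Bool)} (hg : g.toWord = A ++ c)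
    (hh : h.toWord = invRev c ++ B) (hgh : (g * h).toWord = A ++ B) :
    let P₁ := (cSeq1 dec.D g h).flatMap toWord
    let P₂ := (cSeq2 dec.D g h).flatMap toWord
    let P₃ := (cSeq3 dec.D g h).flatMap toWord
    let M₁ := (rSeq1 dec.D g h).flatMap toWord
    let M₂ := (rSeq2 dec.D g h).flatMap toWord
    let M₃ := (rSeq3 dec.D g h).flatMap toWord
    let κ := (M₁.length + M₃.length - M₂.length) / 2
    A = P₁ ++ M₁.take κ ∧ c = M₁.drop κ ++ invRev P₂ ∧ B = (invRev M₃).drop κ ++ invRev P₃ := by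
  have hM := wlen_triangle_of_mul_mul_eq_one (dec.rSeq_prod_mul_mul_eq_one g h)
  rw [dec.wlen_prod_eq_length (dec.triangle₁ g h), dec.wlen_prod_eq_length (dec.triangle₂ g h),
    dec.wlen_prod_eq_length (dec.triangle₃ g h)] at hM
  exact tripod_eq_of_triangle (hg ▸ dec.toWord_eq_of_D_eq (dec.triangle₁ g h))
    (hh ▸ dec.toWord_eq_of_D_eq (dec.triangle₂ g h)) (hgh ▸ dec.toWord_mul_eq_triangle g h)
    (by omega) (by omega) (by omega)

theorem d1_brooksQM_eq_of_le_NDelta (w : FreeGroup α) {p q : FreeGroup α × FreeGroup α}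
    (hpq : (wlen w : ℕ∞) ≤ NDelta dec.D p q) :
    d1 (brooksQM w) p.1 p.2 = d1 (brooksQM w) q.1 q.2 := by
  obtain ⟨g, h⟩ := p
  obtain ⟨g', h'⟩ := q
  rcases eq_or_ne w 1 with rfl | hw
  · simp [brooksQM_one, d1]
  unfold NDelta at hpq
  split_ifs at hpq with heq hr
  · rw [heq]
  · obtain ⟨hr₁, hr₂, hr₃⟩ := hr
    simp only [le_min_iff] at hpq
    obtain ⟨ha₁, ha₂, ha₃⟩ := hpq
    have hk : wlen w - 1 ≤ wlen w := Nat.sub_le _ _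
    have hc₁ := rtake_flatMap_toWord_eq_of_le_seqAgree (l := cSeq1 dec.D g h)
      (dec.one_not_mem_commonPrefix _ _) hk ha₁
    have hc₂ := congrArg invRev <| rtake_flatMap_toWord_eq_of_le_seqAgree (l := cSeq2 dec.D g h)
      (dec.one_not_mem_commonPrefix _ _) hk ha₂
    have hc₃ := congrArg invRev <| rtake_flatMap_toWord_eq_of_le_seqAgree (l := cSeq3 dec.D g h)
      (dec.one_not_mem_commonPrefix _ _) hk ha₃
    rw [← take_invRev, ← take_invRev] at hc₂ hc₃
    obtain ⟨A, c, B, hg, hh, hgh⟩ := exists_toWord_tripod g h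
    obtain ⟨A', c', B', hg', hh', hgh'⟩ := exists_toWord_tripod g' h'
    rw [d1_brooksQM_eq_junctionCount hw hg hh hgh, d1_brooksQM_eq_junctionCount hw hg' hh' hgh']
    obtain ⟨rfl, rfl, rfl⟩ := dec.tripod_eq hg hh hgh
    obtain ⟨rfl, rfl, rfl⟩ := dec.tripod_eq hg' hh' hgh'
    simp only [← hr₁, ← hr₂, ← hr₃]
    rw [rtake_append_congr _ hc₁, take_append_congr _ hc₂, take_append_congr _ hc₃]
  · have : wlen w = 0 := by exact_mod_cast nonpos_iff_eq_zero.1 hpq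
    exact absurd (toWord_eq_nil_iff.1 (length_eq_zero_iff.1 this)) hw

end Decomp

theorem deltaContinuousCocycle_of_abs_le_of_eq {α : Type} [DecidableEq α]
    {D : FreeGroup α → List (FreeGroup α)} {ω : FreeGroup α → FreeGroup α → ℝ} {C : ℝ} (m : ℕ)
    (hC : ∀ g h, |ω g h| ≤ C)
    (hω : ∀ p q, (m : ℕ∞) ≤ NDelta D p q → ω p.1 p.2 = ω q.1 q.2) :
    DeltaContinuousCocycle D ω := by
  have hC₀ : 0 ≤ C := (abs_nonneg _).trans (hC 1 1)
  refine ⟨fun N => if N < m then 2 * C else 0, fun N => by positivity,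
    summable_of_ne_finset_zero (s := Finset.range m) fun N hN => if_neg (by simpa using hN), ?_⟩
  intro p q _ N hN
  dsimp only
  split_ifs with hNm
  · exact (abs_sub _ _).trans (by linarith [hC p.1 p.2, hC q.1 q.2])
  · rw [hω p q (hN ▸ by exact_mod_cast not_lt.1 hNm), sub_self, abs_zero]

theorem brooks_is_continuous_general {α : Type} [DecidableEq α]
    (w : FreeGroup α) (dec : Decomp α) :
    (∀ p q : FreeGroup α × FreeGroup α, (wlen w : ℕ∞) ≤ NDelta dec.D p q →
      d1 (brooksQM w) p.1 p.2 = d1 (brooksQM w) q.1 q.2) ∧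
    DeltaContinuousQM dec.D (brooksQM w) := by
  have hlocal : ∀ p q : FreeGroup α × FreeGroup α, (wlen w : ℕ∞) ≤ NDelta dec.D p q →
      d1 (brooksQM w) p.1 p.2 = d1 (brooksQM w) q.1 q.2 :=
    fun _ _ => dec.d1_brooksQM_eq_of_le_NDelta w
  have hbound := abs_d1_brooksQM_le w
  exact ⟨hlocal, brooksQM_isSymmetricMap w,
    ⟨_, by positivity, fun g h => (hbound g h).trans_lt (lt_add_one _)⟩,
    deltaContinuousCocycle_of_abs_le_of_eq (wlen w) hbound hlocal⟩

/-- Proposition 3.14 (2): a Brooks quasimorphism `φ_w` on a word `w`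
of length `m` satisfies `δ¹φ_w(g,h) = δ¹φ_w(g',h')` whenever `N_Δ((g,h),(g',h')) ≥ m`;
hence `φ_w` is `Δ`-continuous for every decomposition `Δ`. -/
theorem brooks_is_continuous {α : Type} [Fintype α] [DecidableEq α]
    (hab : ∃ a b : α, a ≠ b) (w : FreeGroup α) (hw : NonSelfOverlapping w)
    (dec : Decomp α) :
    (∀ p q : FreeGroup α × FreeGroup α, (wlen w : ℕ∞) ≤ NDelta dec.D p q →
      d1 (brooksQM w) p.1 p.2 = d1 (brooksQM w) q.1 q.2) ∧
    DeltaContinuousQM dec.D (brooksQM w) :=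
  brooks_is_continuous_general w dec
end
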